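/- Let n ≥ 2 be even and let p_1, …, p_n ≥ 0 with Σ_k p_k = 1 define a randomized mechanism that outputs the k-th smallest report o_k(s) with probability p_k. Then there exist a profile s ∈ ℝ^n and a position c ∈ ℝ such that SC_s(c) > 0 and Σ_{k=1}^n p_k · SC_s(o_k(s)) ≥ (3/2 − 1/n) · SC_s(c); in particular, the approximation ratio of any convex combination of k-th ordered statistic mechanisms is at least 3/2 − 1/n (hence at least 3/2 asymptotically). -/

import Mathlib

/-- The `k`-th ordered statistic (0-indexed) of a profile `s` of left endpoints. -/
noncomputable def oStat {n : ℕ} (s : Fin n → ℝ) (k : Fin n) : ℝ :=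
  s (Tuple.sort s k)

open Finset

/-!
Write `n = 2m`. On the profile `lowProfile m` (agents at `0, 1, …, m - 1` and `m` agents at `m`)
every low statistic `k < m` costs `2m - 1` and every high one costs `m`; on the mirrored
`highProfile m` it is the other way round, and on both the optimum is `m`. So for any weights
summing to `1` the two expected costs add up to `3m - 1`, and one of them is at least
`(3m - 1) / 2 = (3/2 - 1/n) · m`.
-/

noncomputable def socialCost {ι : Type*} [Fintype ι] (s : ι → ℝ) (c : ℝ) : ℝ :=
  ∑ i, min 1 |c - s i|

noncomputable def expectedCost {n : ℕ} (p s : Fin n → ℝ) : ℝ :=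
  ∑ k, p k * socialCost s (oStat s k)

lemma min_one_abs_intCast_sub (a b : ℤ) : min 1 |(a : ℝ) - b| = if b = a then 0 else 1 := by
  split_ifs with h
  · simp [h]
  · refine min_eq_left ?_
    exact_mod_cast Int.one_le_abs (sub_ne_zero.mpr (Ne.symm h))

lemma socialCost_intCast {ι : Type*} [Fintype ι] (t : ι → ℤ) (a : ℤ) :
    socialCost (fun i => (t i : ℝ)) a = #{i | t i ≠ a} := by
  simp only [socialCost, min_one_abs_intCast_sub, natCast_card_filter]
  exact sum_congr rfl fun i _ => by split_ifs <;> simp_all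

lemma oStat_of_monotone {n : ℕ} {s : Fin n → ℝ} (hs : Monotone s) (k : Fin n) :
    oStat s k = s k := by
  rw [oStat, Tuple.sort_eq_refl_iff_monotone.mpr hs, Equiv.refl_apply]

lemma expectedCost_of_monotone {n : ℕ} (p : Fin n → ℝ) {s : Fin n → ℝ} (hs : Monotone s) :
    expectedCost p s = ∑ k, p k * socialCost s (s k) := by
  simp only [expectedCost, oStat_of_monotone hs]

lemma card_filter_apply_ne_of_eq_iff {ι α : Type*} [Fintype ι] [DecidableEq ι] [DecidableEq α]
    (f : ι → α) (k : ι) (hf : ∀ i, f i = f k ↔ i = k) :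
    #{i | f i ≠ f k} = Fintype.card ι - 1 := by
  simp only [ne_eq, hf, filter_ne', card_erase_of_mem (mem_univ k), card_univ]

section TwoProfiles

variable (m : ℕ)

def lowProfile (i : Fin (m + m)) : ℤ := min (i : ℤ) m

def highProfile (i : Fin (m + m)) : ℤ := max (i : ℤ) (m - 1)

lemma lowProfile_monotone : Monotone (lowProfile m) := fun i j hij => by
  simp only [lowProfile]; gcongr; exact_mod_cast hij

lemma highProfile_monotone : Monotone (highProfile m) := fun i j hij => by
  simp only [highProfile]; gcongr; exact_mod_cast hij

lemma card_lowProfile_ne : #{i | lowProfile m i ≠ m} = m := by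
  have h : ∀ i ∈ univ, lowProfile m i ≠ m ↔ (i : ℕ) < m := fun i _ => by
    simp only [lowProfile]; omega
  rw [filter_congr h, Fin.card_filter_val_lt]; omega

lemma card_highProfile_ne : #{i | highProfile m i ≠ m - 1} = m := by
  have h : ∀ i ∈ univ, highProfile m i ≠ m - 1 ↔ ¬ (i : ℕ) < m := fun i _ => by
    simp only [highProfile]; omega
  rw [filter_congr h, filter_not, card_sdiff_of_subset (filter_subset _ _),
    Fin.card_filter_val_lt, card_univ, Fintype.card_fin]
  omega

lemma card_lowProfile_ne_add_card_highProfile_ne (k : Fin (m + m)) :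
    #{i | lowProfile m i ≠ lowProfile m k} + #{i | highProfile m i ≠ highProfile m k} + 1
      = 3 * m := by
  rcases lt_or_ge (k : ℕ) m with hk | hk
  · have hlow : #{i | lowProfile m i ≠ lowProfile m k} = m + m - 1 := by
      rw [card_filter_apply_ne_of_eq_iff _ _ fun i => ?_, Fintype.card_fin]
      simp only [lowProfile, Fin.ext_iff]; omega
    have hhigh : highProfile m k = m - 1 := by simp only [highProfile]; omega
    rw [hlow, hhigh, card_highProfile_ne]; omega
  · have hlow : lowProfile m k = m := by simp only [lowProfile]; omega
    have hhigh : #{i | highProfile m i ≠ highProfile m k} = m + m - 1 := by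
      rw [card_filter_apply_ne_of_eq_iff _ _ fun i => ?_, Fintype.card_fin]
      simp only [highProfile, Fin.ext_iff]; omega
    rw [hlow, hhigh, card_lowProfile_ne]; omega

lemma expectedCost_lowProfile_add_highProfile (p : Fin (m + m) → ℝ) (hp : ∑ k, p k = 1) :
    expectedCost p (fun i => (lowProfile m i : ℝ)) +
      expectedCost p (fun i => (highProfile m i : ℝ)) + 1 = 3 * m := by
  rw [expectedCost_of_monotone p (s := fun i => (lowProfile m i : ℝ))
      ((Int.cast_mono).comp (lowProfile_monotone m)),
    expectedCost_of_monotone p (s := fun i => (highProfile m i : ℝ))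
      ((Int.cast_mono).comp (highProfile_monotone m)),
    ← sum_add_distrib]
  simp only [socialCost_intCast, ← mul_add]
  have hcost : ∀ k, ((#{i | lowProfile m i ≠ lowProfile m k} : ℕ) : ℝ) +
      #{i | highProfile m i ≠ highProfile m k} = 3 * m - 1 := fun k => by
    rw [eq_sub_iff_add_eq]; exact_mod_cast card_lowProfile_ne_add_card_highProfile_ne m k
  simp only [hcost, ← sum_mul, hp]; ring

lemma socialCost_lowProfile : socialCost (fun i => (lowProfile m i : ℝ)) m = m := by
  exact_mod_cast (socialCost_intCast _ _).trans (congrArg _ (card_lowProfile_ne m))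

lemma socialCost_highProfile : socialCost (fun i => (highProfile m i : ℝ)) (m - 1) = m := by
  exact_mod_cast (socialCost_intCast _ _).trans (congrArg _ (card_highProfile_ne m))

end TwoProfiles

theorem randomized_ordered_statistic_lower_bound_general (n : ℕ) (hn : 2 ≤ n) (hev : Even n)
    (p : Fin n → ℝ) (hsum : ∑ k, p k = 1) :
    ∃ (s : Fin n → ℝ) (c : ℝ),
      0 < (∑ i, min 1 |c - s i|) ∧
      (3 / 2 - 1 / (n : ℝ)) * (∑ i, min 1 |c - s i|) ≤
        ∑ k, p k * ∑ i, min 1 |oStat s k - s i| := by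
  obtain ⟨m, rfl⟩ := hev
  have hm : (1 : ℝ) ≤ m := by exact_mod_cast (by omega : 1 ≤ m)
  have hratio : (3 / 2 - 1 / ((m + m : ℕ) : ℝ)) * m = (3 * m - 1) / 2 := by
    push_cast; field_simp; ring
  suffices ∃ (s : Fin (m + m) → ℝ) (c : ℝ),
      socialCost s c = m ∧ (3 * m - 1) / 2 ≤ expectedCost p s by
    obtain ⟨s, c, hc, hE⟩ := this
    refine ⟨s, c, ?_⟩
    change 0 < socialCost s c ∧ _ * socialCost s c ≤ expectedCost p s
    rw [hc, hratio]
    exact ⟨by linarith, hE⟩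
  have hsplit := expectedCost_lowProfile_add_highProfile m p hsum
  rcases le_total ((3 * m - 1) / 2 : ℝ) (expectedCost p fun i => (lowProfile m i : ℝ))
    with h | h
  exacts [⟨_, _, socialCost_lowProfile m, h⟩, ⟨_, _, socialCost_highProfile m, by linarith⟩]

/-- Lower bound for randomized ordered-statistic mechanisms: for every convex
combination of `k`-th ordered statistic mechanisms (given by probabilities `p`)
there are a profile `s` and a position `c` with positive social cost such that
the expected social cost of the mechanism is at least `(3/2 - 1/n)` times the
social cost of `c`. -/
theorem randomized_ordered_statistic_lower_bound (n : ℕ) (hn : 2 ≤ n) (hev : Even n)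
    (p : Fin n → ℝ) (hp : ∀ k, 0 ≤ p k) (hsum : ∑ k, p k = 1) :
    ∃ (s : Fin n → ℝ) (c : ℝ),
      0 < (∑ i, min 1 |c - s i|) ∧
      (3 / 2 - 1 / (n : ℝ)) * (∑ i, min 1 |c - s i|) ≤
        ∑ k, p k * ∑ i, min 1 |oStat s k - s i| :=
  randomized_ordered_statistic_lower_bound_general n hn hev p hsum
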